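/- Without assuming any external validity, under experimental internal validity, latent unconfounding, consistency and strict overlap, the bias of the data-combination formula for the treated arm admits the decomposition E[Y2(1) | G=1] − Σ_{x} P(X=x | G=1) Σ_{y} P(Y1=y | W=1, X=x, G=0) E[Y2 | Y1=y, W=1, X=x, G=1] = Σ_{x} P(X=x | G=1) Σ_{y} ( P(Y1(1)=y | X=x, G=1) − P(Y1(1)=y | X=x, G=0) ) · E[Y2(1) | Y1(1)=y, X=x, G=1]; in particular the bias vanishes whenever P(Y1(1)=y | X=x, G=1) = P(Y1(1)=y | X=x, G=0) for all y and all x in the support of X given G=1. -/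

import Mathlib

open MeasureTheory ProbabilityTheory

/-- Conditional probability `P(A | B)` as a real number. -/
noncomputable def cP {Ω : Type*} [MeasurableSpace Ω] (P : Measure Ω) (A B : Set Ω) : ℝ :=
  ((P[|B]) A).toReal

/-- Conditional expectation `E[Y | B]` (expectation under the conditional measure). -/
noncomputable def cE {Ω : Type*} [MeasurableSpace Ω] (P : Measure Ω) (Y : Ω → ℝ) (B : Set Ω) :
    ℝ :=
  ∫ ω, Y ω ∂(P[|B])

/-! The target mean `E[Y2(1) | G=1]` expands, by the law of total expectation over `X` and then
`Y1(1)` within the observational group, into the same double sum as the data-combination formula,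
except for two factors. Consistency and internal validity show that additionally conditioning on
`W = 1` in the experimental group does not change the law of `Y1(1)` given `X`; consistency and
latent unconfounding show that additionally conditioning on `W = 1` in the observational group
does not change the mean of `Y2(1)` given `(Y1(1), X)`. The bias is therefore the contrast of the
short-term laws of the two groups, weighted by the long-term conditional means. -/

namespace ProbabilityTheory

variable {Ω β γ E : Type*} [MeasurableSpace Ω] [MeasurableSpace β] [MeasurableSpace γ]
  [NormedAddCommGroup E]
  {μ : Measure Ω} {s : Set β} {t : Set γ} {W : Ω → β} {Z : Ω → γ}

lemma integrable_cond {f : Ω → E} {A : Set Ω} (hf : Integrable f μ) : Integrable f μ[|A] := by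
  rcases eq_or_ne (μ A) 0 with hA | hA
  · rw [cond_eq_zero_of_meas_eq_zero hA]
    exact integrable_zero_measure
  · exact hf.restrict.smul_measure (ENNReal.inv_ne_top.2 hA)

lemma integral_eq_sum_measure_mul_integral_cond [NormedSpace ℝ E] [Fintype γ]
    [MeasurableSingletonClass γ] [IsFiniteMeasure μ] (hZ : Measurable Z) {f : Ω → E}
    (hf : Integrable f μ) :
    ∫ ω, f ω ∂μ = ∑ c, (μ (Z ⁻¹' {c})).toReal • ∫ ω, f ω ∂μ[|Z ⁻¹' {c}] := by
  conv_lhs => rw [← sum_meas_smul_cond_fiber hZ μ]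
  rw [integral_finsetSum_measure fun c _ ↦ (integrable_cond hf).smul_measure (measure_ne_top _ _)]
  simp only [integral_smul_measure]

lemma IndepFun.cond_preimage_apply [IsFiniteMeasure μ] (hind : IndepFun W Z μ) (hW : Measurable W)
    (hs : MeasurableSet s) (ht : MeasurableSet t) (hWs : μ (W ⁻¹' s) ≠ 0) :
    μ[|W ⁻¹' s] (Z ⁻¹' t) = μ (Z ⁻¹' t) := by
  rw [cond_apply (hW hs), hind.measure_inter_preimage_eq_mul s t hs ht, ← mul_assoc,
    ENNReal.inv_mul_cancel hWs (measure_ne_top μ _), one_mul]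

lemma IndepFun.identDistrib_cond_preimage [IsFiniteMeasure μ] (hind : IndepFun W Z μ)
    (hW : Measurable W) (hZ : Measurable Z) (hs : MeasurableSet s) (hWs : μ (W ⁻¹' s) ≠ 0) :
    IdentDistrib Z Z μ[|W ⁻¹' s] μ where
  aemeasurable_fst := hZ.aemeasurable
  aemeasurable_snd := hZ.aemeasurable
  map_eq := Measure.ext fun t ht ↦ by
    rw [Measure.map_apply hZ ht, Measure.map_apply hZ ht, hind.cond_preimage_apply hW hs ht hWs]

end ProbabilityTheory

section ConditionalMoments

variable {Ω β γ : Type*} [MeasurableSpace Ω] [MeasurableSpace β] [MeasurableSpace γ]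
  {P : Measure Ω} {A B : Set Ω} {s : Set β} {t : Set γ} {W : Ω → β}

lemma cP_congr_of_inter_eq {A' : Set Ω} (hB : MeasurableSet B) (h : B ∩ A = B ∩ A') :
    cP P A B = cP P A' B := by
  rw [cP, cP, ← cond_inter_self hB, h, cond_inter_self hB]

lemma cE_congr_of_eqOn {f g : Ω → ℝ} (hB : MeasurableSet B) (h : Set.EqOn f g B) :
    cE P f B = cE P g B :=
  integral_congr_ae ((ae_cond_mem hB).mono fun _ hω ↦ h hω)

lemma cE_eq_sum_cP_mul_cE [IsFiniteMeasure P] [Fintype γ] [MeasurableSingletonClass γ] {Z : Ω → γ}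
    (hZ : Measurable Z) (hB : MeasurableSet B) {f : Ω → ℝ} (hf : Integrable f P) :
    cE P f B = ∑ c, cP P {ω | Z ω = c} B * cE P f ({ω | Z ω = c} ∩ B) := by
  rw [cE, integral_eq_sum_measure_mul_integral_cond hZ (integrable_cond hf)]
  refine Finset.sum_congr rfl fun c _ ↦ ?_
  rw [smul_eq_mul, cond_cond_eq_cond_inter hB (hZ (measurableSet_singleton c)), Set.inter_comm]
  rfl

lemma cP_inter_preimage_of_indepFun [IsFiniteMeasure P] {Z : Ω → γ} (hB : MeasurableSet B)
    (hW : Measurable W) (hind : IndepFun W Z P[|B]) (hs : MeasurableSet s) (ht : MeasurableSet t)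
    (hBW : P (B ∩ W ⁻¹' s) ≠ 0) :
    cP P (Z ⁻¹' t) (B ∩ W ⁻¹' s) = cP P (Z ⁻¹' t) B := by
  rw [cP, cP, ← cond_cond_eq_cond_inter hB (hW hs),
    hind.cond_preimage_apply hW hs ht (cond_pos_of_inter_ne_zero hB hBW).ne']

lemma cE_inter_preimage_of_indepFun [IsFiniteMeasure P] {f : Ω → ℝ} (hB : MeasurableSet B)
    (hW : Measurable W) (hf : Measurable f) (hind : IndepFun W f P[|B]) (hs : MeasurableSet s)
    (hBW : P (B ∩ W ⁻¹' s) ≠ 0) :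
    cE P f (B ∩ W ⁻¹' s) = cE P f B := by
  rw [cE, cE, ← cond_cond_eq_cond_inter hB (hW hs)]
  exact (hind.identDistrib_cond_preimage hW hf hs
    (cond_pos_of_inter_ne_zero hB hBW).ne').integral_eq

end ConditionalMoments

section PotentialOutcomes

variable {Ω α : Type*} [MeasurableSpace Ω] [MeasurableSpace α] [MeasurableSingletonClass α]
  {P : Measure Ω} [IsFiniteMeasure P] {W : Ω → Bool} {b : Bool} {B : Set Ω}

lemma cP_observed_eq_potential_of_indepFun {Y : Bool → Ω → α} (hW : Measurable W)
    (hB : MeasurableSet B) (hind : IndepFun W (Y b) P[|B]) (hBW : P ({ω | W ω = b} ∩ B) ≠ 0)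
    (y : α) :
    cP P {ω | Y (W ω) ω = y} ({ω | W ω = b} ∩ B) = cP P {ω | Y b ω = y} B := by
  have mWB : MeasurableSet ({ω | W ω = b} ∩ B) := (hW (measurableSet_singleton b)).inter hB
  have hWB : {ω | W ω = b} ∩ B = B ∩ W ⁻¹' {b} := Set.inter_comm _ _
  rw [cP_congr_of_inter_eq mWB (A' := {ω | Y b ω = y})]
  · rw [hWB] at hBW ⊢
    exact cP_inter_preimage_of_indepFun hB hW hind (measurableSet_singleton b)
      (measurableSet_singleton y) hBW
  · ext ω
    by_cases hw : W ω = b <;> simp [hw]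

lemma cE_observed_eq_potential_of_indepFun {Y : Bool → Ω → α} {Z : Bool → Ω → ℝ} {y : α}
    (hW : Measurable W) (hB : MeasurableSet B) (hY : Measurable (Y b)) (hZ : Measurable (Z b))
    (hind : IndepFun W (Z b) P[|{ω | Y b ω = y} ∩ B])
    (hpos : P ({ω | Y (W ω) ω = y} ∩ ({ω | W ω = b} ∩ B)) ≠ 0) :
    cE P (fun ω ↦ Z (W ω) ω) ({ω | Y (W ω) ω = y} ∩ ({ω | W ω = b} ∩ B)) =
      cE P (Z b) ({ω | Y b ω = y} ∩ B) := by
  have mYB : MeasurableSet ({ω | Y b ω = y} ∩ B) := (hY (measurableSet_singleton y)).inter hB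
  have hset : {ω | Y (W ω) ω = y} ∩ ({ω | W ω = b} ∩ B) = ({ω | Y b ω = y} ∩ B) ∩ W ⁻¹' {b} := by
    ext ω
    by_cases hw : W ω = b <;> simp [hw, and_comm]
  rw [hset] at hpos ⊢
  rw [cE_congr_of_eqOn (mYB.inter (hW (measurableSet_singleton b))) (g := Z b)
    fun ω hω ↦ by simp only [show W ω = b from hω.2]]
  exact cE_inter_preimage_of_indepFun mYB hW hZ hind (measurableSet_singleton b) hpos

end PotentialOutcomes

theorem bias_decomposition_without_external_validity_general
    {Ω : Type*} [MeasurableSpace Ω] (P : Measure Ω) [IsProbabilityMeasure P]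
    {𝒳 𝒴 : Type*} [Fintype 𝒳] [Fintype 𝒴]
    [MeasurableSpace 𝒳] [MeasurableSingletonClass 𝒳]
    [MeasurableSpace 𝒴] [MeasurableSingletonClass 𝒴]
    (W G : Ω → Bool) (X : Ω → 𝒳) (Y1 : Bool → Ω → 𝒴) (Y2 : Bool → Ω → ℝ)
    (hW : Measurable W) (hG : Measurable G) (hX : Measurable X)
    (hY1 : ∀ w, Measurable (Y1 w)) (hY2 : ∀ w, Measurable (Y2 w))
    (hY2int : ∀ w, Integrable (Y2 w) P)
    -- experimental internal validity
    (hIV : ∀ x : 𝒳, 0 < P ({ω | X ω = x} ∩ {ω | G ω = false}) →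
      IndepFun W (fun ω => (Y2 true ω, Y2 false ω, Y1 true ω, Y1 false ω))
        (P[|{ω | X ω = x} ∩ {ω | G ω = false}]))
    -- latent unconfounding
    (hLU : ∀ (w : Bool) (y : 𝒴) (x : 𝒳),
      0 < P ({ω | Y1 w ω = y} ∩ {ω | X ω = x} ∩ {ω | G ω = true}) →
      IndepFun W (Y2 w) (P[|{ω | Y1 w ω = y} ∩ {ω | X ω = x} ∩ {ω | G ω = true}]))
    -- strict overlap: every conditioning event has positive probability
    (hOvWXG0 : ∀ x : 𝒳, 0 < P ({ω | W ω = true} ∩ {ω | X ω = x} ∩ {ω | G ω = false}))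
    (hOvXG1 : ∀ x : 𝒳, 0 < P ({ω | X ω = x} ∩ {ω | G ω = true}))
    (hOvXG0 : ∀ x : 𝒳, 0 < P ({ω | X ω = x} ∩ {ω | G ω = false}))
    (hOvY1 : ∀ (y : 𝒴) (x : 𝒳),
      0 < P ({ω | Y1 true ω = y} ∩ {ω | X ω = x} ∩ {ω | G ω = true}))
    (hOvObs : ∀ (y : 𝒴) (x : 𝒳),
      0 < P ({ω | Y1 (W ω) ω = y} ∩ {ω | W ω = true} ∩ {ω | X ω = x} ∩ {ω | G ω = true})) :
    (cE P (Y2 true) {ω | G ω = true} -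
      ∑ x : 𝒳, cP P {ω | X ω = x} {ω | G ω = true} *
        ∑ y : 𝒴,
          cP P {ω | Y1 (W ω) ω = y}
            ({ω | W ω = true} ∩ {ω | X ω = x} ∩ {ω | G ω = false}) *
          cE P (fun ω => Y2 (W ω) ω)
            ({ω | Y1 (W ω) ω = y} ∩ {ω | W ω = true} ∩ {ω | X ω = x} ∩ {ω | G ω = true}))
    =
      ∑ x : 𝒳, cP P {ω | X ω = x} {ω | G ω = true} *
        ∑ y : 𝒴,
          (cP P {ω | Y1 true ω = y} ({ω | X ω = x} ∩ {ω | G ω = true}) -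
            cP P {ω | Y1 true ω = y} ({ω | X ω = x} ∩ {ω | G ω = false})) *
          cE P (Y2 true) ({ω | Y1 true ω = y} ∩ {ω | X ω = x} ∩ {ω | G ω = true})
    ∧
    ((∀ (y : 𝒴) (x : 𝒳), 0 < P ({ω | X ω = x} ∩ {ω | G ω = true}) →
        cP P {ω | Y1 true ω = y} ({ω | X ω = x} ∩ {ω | G ω = true}) =
          cP P {ω | Y1 true ω = y} ({ω | X ω = x} ∩ {ω | G ω = false})) →
      cE P (Y2 true) {ω | G ω = true} =
        ∑ x : 𝒳, cP P {ω | X ω = x} {ω | G ω = true} *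
          ∑ y : 𝒴,
            cP P {ω | Y1 (W ω) ω = y}
              ({ω | W ω = true} ∩ {ω | X ω = x} ∩ {ω | G ω = false}) *
            cE P (fun ω => Y2 (W ω) ω)
              ({ω | Y1 (W ω) ω = y} ∩ {ω | W ω = true} ∩ {ω | X ω = x} ∩ {ω | G ω = true})) := by
  have mG : ∀ b, MeasurableSet {ω | G ω = b} := fun b ↦ hG (measurableSet_singleton b)
  have mXG : ∀ x b, MeasurableSet ({ω | X ω = x} ∩ {ω | G ω = b}) :=
    fun x b ↦ (hX (measurableSet_singleton x)).inter (mG b)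
  simp only [Set.inter_assoc] at hLU hOvWXG0 hOvY1 hOvObs ⊢
  have experimental : ∀ y x, cP P {ω | Y1 (W ω) ω = y}
      ({ω | W ω = true} ∩ ({ω | X ω = x} ∩ {ω | G ω = false})) =
        cP P {ω | Y1 true ω = y} ({ω | X ω = x} ∩ {ω | G ω = false}) := fun y x ↦
    cP_observed_eq_potential_of_indepFun hW (mXG x false)
      ((hIV x (hOvXG0 x)).comp measurable_id measurable_snd.snd.fst) (hOvWXG0 x).ne' y
  have observational : ∀ y x, cE P (fun ω ↦ Y2 (W ω) ω)
      ({ω | Y1 (W ω) ω = y} ∩ ({ω | W ω = true} ∩ ({ω | X ω = x} ∩ {ω | G ω = true}))) =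
        cE P (Y2 true) ({ω | Y1 true ω = y} ∩ ({ω | X ω = x} ∩ {ω | G ω = true})) := fun y x ↦
    cE_observed_eq_potential_of_indepFun hW (mXG x true) (hY1 true) (hY2 true)
      (hLU true y x (hOvY1 y x)) (hOvObs y x).ne'
  simp only [cE_eq_sum_cP_mul_cE hX (mG true) (hY2int true),
    cE_eq_sum_cP_mul_cE (hY1 true) (mXG _ true) (hY2int true), experimental, observational]
  refine ⟨by simp only [← Finset.sum_sub_distrib, ← mul_sub, ← sub_mul], fun hsame ↦ ?_⟩
  exact Finset.sum_congr rfl fun x _ ↦ by simp only [hsame _ x (hOvXG1 x)]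

/-- Without any external validity assumption, under experimental internal
validity, latent unconfounding, consistency and strict overlap, the bias of the
data-combination formula for the treated arm decomposes as a weighted contrast of the
conditional distributions of the treated short-term potential outcome across the two groups;
in particular, the bias vanishes whenever these conditional distributions agree. -/
theorem bias_decomposition_without_external_validity
    {Ω : Type*} [MeasurableSpace Ω] (P : Measure Ω) [IsProbabilityMeasure P]
    {𝒳 𝒴 : Type*} [Fintype 𝒳] [Fintype 𝒴]
    [MeasurableSpace 𝒳] [MeasurableSingletonClass 𝒳]
    [MeasurableSpace 𝒴] [MeasurableSingletonClass 𝒴]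
    (W G : Ω → Bool) (X : Ω → 𝒳) (Y1 : Bool → Ω → 𝒴) (Y2 : Bool → Ω → ℝ)
    (hW : Measurable W) (hG : Measurable G) (hX : Measurable X)
    (hY1 : ∀ w, Measurable (Y1 w)) (hY2 : ∀ w, Measurable (Y2 w))
    (hY2int : ∀ w, Integrable (Y2 w) P)
    -- experimental internal validity
    (hIV : ∀ x : 𝒳, 0 < P ({ω | X ω = x} ∩ {ω | G ω = false}) →
      IndepFun W (fun ω => (Y2 true ω, Y2 false ω, Y1 true ω, Y1 false ω))
        (P[|{ω | X ω = x} ∩ {ω | G ω = false}]))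
    -- latent unconfounding
    (hLU : ∀ (w : Bool) (y : 𝒴) (x : 𝒳),
      0 < P ({ω | Y1 w ω = y} ∩ {ω | X ω = x} ∩ {ω | G ω = true}) →
      IndepFun W (Y2 w) (P[|{ω | Y1 w ω = y} ∩ {ω | X ω = x} ∩ {ω | G ω = true}]))
    -- strict overlap: every conditioning event has positive probability
    (hG1 : 0 < P {ω | G ω = true})
    (hOvWXG0 : ∀ x : 𝒳, 0 < P ({ω | W ω = true} ∩ {ω | X ω = x} ∩ {ω | G ω = false}))
    (hOvXG1 : ∀ x : 𝒳, 0 < P ({ω | X ω = x} ∩ {ω | G ω = true}))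
    (hOvXG0 : ∀ x : 𝒳, 0 < P ({ω | X ω = x} ∩ {ω | G ω = false}))
    (hOvY1 : ∀ (y : 𝒴) (x : 𝒳),
      0 < P ({ω | Y1 true ω = y} ∩ {ω | X ω = x} ∩ {ω | G ω = true}))
    (hOvObs : ∀ (y : 𝒴) (x : 𝒳),
      0 < P ({ω | Y1 (W ω) ω = y} ∩ {ω | W ω = true} ∩ {ω | X ω = x} ∩ {ω | G ω = true})) :
    (cE P (Y2 true) {ω | G ω = true} -
      ∑ x : 𝒳, cP P {ω | X ω = x} {ω | G ω = true} *
        ∑ y : 𝒴,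
          cP P {ω | Y1 (W ω) ω = y}
            ({ω | W ω = true} ∩ {ω | X ω = x} ∩ {ω | G ω = false}) *
          cE P (fun ω => Y2 (W ω) ω)
            ({ω | Y1 (W ω) ω = y} ∩ {ω | W ω = true} ∩ {ω | X ω = x} ∩ {ω | G ω = true}))
    =
      ∑ x : 𝒳, cP P {ω | X ω = x} {ω | G ω = true} *
        ∑ y : 𝒴,
          (cP P {ω | Y1 true ω = y} ({ω | X ω = x} ∩ {ω | G ω = true}) -
            cP P {ω | Y1 true ω = y} ({ω | X ω = x} ∩ {ω | G ω = false})) *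
          cE P (Y2 true) ({ω | Y1 true ω = y} ∩ {ω | X ω = x} ∩ {ω | G ω = true})
    ∧
    ((∀ (y : 𝒴) (x : 𝒳), 0 < P ({ω | X ω = x} ∩ {ω | G ω = true}) →
        cP P {ω | Y1 true ω = y} ({ω | X ω = x} ∩ {ω | G ω = true}) =
          cP P {ω | Y1 true ω = y} ({ω | X ω = x} ∩ {ω | G ω = false})) →
      cE P (Y2 true) {ω | G ω = true} =
        ∑ x : 𝒳, cP P {ω | X ω = x} {ω | G ω = true} *
          ∑ y : 𝒴,
            cP P {ω | Y1 (W ω) ω = y}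
              ({ω | W ω = true} ∩ {ω | X ω = x} ∩ {ω | G ω = false}) *
            cE P (fun ω => Y2 (W ω) ω)
              ({ω | Y1 (W ω) ω = y} ∩ {ω | W ω = true} ∩ {ω | X ω = x} ∩ {ω | G ω = true})) :=
  bias_decomposition_without_external_validity_general P W G X Y1 Y2 hW hG hX hY1 hY2 hY2int hIV hLU
    hOvWXG0 hOvXG1 hOvXG0 hOvY1 hOvObs
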